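/- arXiv:2604.18809 — 3 statements merged into one kernel-verified Lean document; each statement's English description precedes it below -/
import Mathlib

section
/- Let b, d, θ, η, m > 0, μ ∈ [0,1], α ∈ (0,1), let v ∈ C¹([0,1]) with v(0) = v(1) = 0, and let p ∈ L²((0,1)×(0,1)) with p ≥ 0 a.e. and ∫₀¹ p(x,y) dx = 1 for a.e. y. Assume θ/η < d/b. Suppose R ≥ 0 and n : [0,1] → ℝ is nonnegative, continuously differentiable with n'(0) = n'(1) = 0, n' has an integrable derivative g (i.e. n'(x) = n'(0) + ∫₀ˣ g(s) ds), and the steady-state equations hold: for a.e. x ∈ (0,1), 0 = χ_α(x)(bR − d)n(x) − μ b R χ_α(x) n(x) + μ b R ∫₀¹ χ_α(y) n(y) p(x,y) dy − (v n)'(x) + m g(x), and 0 = θ − η R − b R ∫₀¹ χ_α(x) n(x) dx. Then n ≡ 0 on [0,1] and R = θ/η. -/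
open MeasureTheory Set Topology Filter Interval

/-- The indicator of the active region: `χ_α x = 1` if `x < α`, else `0`. -/
noncomputable def chi (α : ℝ) (x : ℝ) : ℝ := if x < α then 1 else 0

section chihelpers

lemma chi_meas (α : ℝ) : Measurable (chi α) := by
  unfold chi
  exact Measurable.ite (measurableSet_lt measurable_id measurable_const)
    measurable_const measurable_const

lemma chi_nonneg (α x : ℝ) : 0 ≤ chi α x := by unfold chi; split <;> norm_num

lemma abs_chi_le_one (α x : ℝ) : |chi α x| ≤ 1 := by unfold chi; split <;> norm_num

lemma chi_of_lt {α x : ℝ} (h : x < α) : chi α x = 1 := if_pos h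
lemma chi_of_ge {α x : ℝ} (h : α ≤ x) : chi α x = 0 := if_neg (not_lt.2 h)

end chihelpers

/-- Below the threshold `θ/η < d/b`, the washout state is the only nonnegative
steady state: any nonnegative steady-state solution `(n, R)` satisfies `n ≡ 0`
and `R = θ/η`. -/
theorem stmt_10 (b d θ η m μ α : ℝ)
    (hb : 0 < b) (hd : 0 < d) (hθ : 0 < θ) (hη : 0 < η) (hm : 0 < m)
    (hμ : μ ∈ Set.Icc (0:ℝ) 1) (hα : α ∈ Set.Ioo (0:ℝ) 1)
    (v v' : ℝ → ℝ)
    (hv : ∀ x ∈ Set.Icc (0:ℝ) 1, HasDerivWithinAt v (v' x) (Set.Icc 0 1) x)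
    (hv'c : ContinuousOn v' (Set.Icc 0 1))
    (hv0 : v 0 = 0) (hv1 : v 1 = 0)
    (p : ℝ × ℝ → ℝ)
    (hp : MemLp p 2 (volume.restrict ((Set.Ioo (0:ℝ) 1) ×ˢ (Set.Ioo (0:ℝ) 1))))
    (hp0 : ∀ᵐ z ∂(volume.restrict ((Set.Ioo (0:ℝ) 1) ×ˢ (Set.Ioo (0:ℝ) 1))), 0 ≤ p z)
    (hpnorm : ∀ᵐ y ∂(volume.restrict (Set.Ioo (0:ℝ) 1)),
      (∫ x in Set.Ioo (0:ℝ) 1, p (x, y)) = 1)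
    (hthresh : θ / η < d / b)
    (R : ℝ) (hR : 0 ≤ R)
    (n n' g : ℝ → ℝ)
    (hnpos : ∀ x ∈ Set.Icc (0:ℝ) 1, 0 ≤ n x)
    (hn : ∀ x ∈ Set.Icc (0:ℝ) 1, HasDerivWithinAt n (n' x) (Set.Icc 0 1) x)
    (hn'c : ContinuousOn n' (Set.Icc 0 1))
    (hnb0 : n' 0 = 0) (hnb1 : n' 1 = 0)
    (hg : IntegrableOn g (Set.Ioo (0:ℝ) 1))
    (hac : ∀ x ∈ Set.Icc (0:ℝ) 1, n' x = n' 0 + ∫ s in (0:ℝ)..x, g s)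
    (hss_n : ∀ᵐ x ∂(volume.restrict (Set.Ioo (0:ℝ) 1)),
      0 = chi α x * (b * R - d) * n x - μ * b * R * chi α x * n x
          + μ * b * R * (∫ y in Set.Ioo (0:ℝ) 1, chi α y * n y * p (x, y))
          - (v' x * n x + v x * n' x) + m * g x)
    (hss_R : 0 = θ - η * R - b * R * ∫ x in Set.Ioo (0:ℝ) 1, chi α x * n x) :
    (∀ x ∈ Set.Icc (0:ℝ) 1, n x = 0) ∧ R = θ / η := by
  obtain ⟨hα0, hα1⟩ := hα
  have hIccsub : Ioo (0:ℝ) 1 ⊆ Icc (0:ℝ) 1 := Ioo_subset_Icc_self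
  have hnc : ContinuousOn n (Icc (0:ℝ) 1) := fun x hx => (hn x hx).continuousWithinAt
  have hvc : ContinuousOn v (Icc (0:ℝ) 1) := fun x hx => (hv x hx).continuousWithinAt
  -- continuous extension of n
  set N : ℝ → ℝ := IccExtend zero_le_one ((Icc (0:ℝ) 1).restrict n) with hN
  have hNc : Continuous N := Continuous.Icc_extend' (continuousOn_iff_continuous_restrict.1 hnc)
  have hNn : ∀ x ∈ Icc (0:ℝ) 1, N x = n x := fun x hx => by
    simp [hN, IccExtend_of_mem zero_le_one _ hx, Set.restrict]
  obtain ⟨C, hC⟩ : ∃ C, ∀ y, ‖N y‖ ≤ C := by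
    obtain ⟨C, hC⟩ := (isCompact_Icc.image_of_continuousOn hnc).isBounded.exists_norm_le
    refine ⟨C, fun y => ?_⟩
    have : N y ∈ n '' (Icc (0:ℝ) 1) := by
      rw [hN, IccExtend_apply]
      exact ⟨_, (projIcc (0:ℝ) 1 zero_le_one y).2, rfl⟩
    exact hC _ this
  set q : ℝ → ℝ := fun y => chi α y * N y with hq
  have hq_meas : Measurable q := (chi_meas α).mul hNc.measurable
  have hq_bdd : ∀ y, ‖q y‖ ≤ C := by
    intro y
    have h1 : ‖q y‖ = |chi α y| * ‖N y‖ := by rw [hq]; exact abs_mul _ _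
    rw [h1]
    calc |chi α y| * ‖N y‖ ≤ 1 * ‖N y‖ :=
          mul_le_mul_of_nonneg_right (abs_chi_le_one α y) (norm_nonneg _)
      _ = ‖N y‖ := one_mul _
      _ ≤ C := hC y
  -- the washout integral I
  set I : ℝ := ∫ x in Ioo (0:ℝ) 1, chi α x * n x with hI
  have hIq : I = ∫ y in Ioo (0:ℝ) 1, q y := by
    refine setIntegral_congr_fun measurableSet_Ioo fun x hx => ?_
    rw [hq]; simp only [hNn x (hIccsub hx)]
  have hInonneg : 0 ≤ I :=
    setIntegral_nonneg measurableSet_Ioo fun x hx =>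
      mul_nonneg (chi_nonneg α x) (hnpos x (hIccsub hx))
  -- product measure facts
  have hμprod : (volume : Measure (ℝ×ℝ)).restrict (Ioo (0:ℝ) 1 ×ˢ Ioo (0:ℝ) 1)
      = (volume.restrict (Ioo (0:ℝ) 1)).prod (volume.restrict (Ioo (0:ℝ) 1)) := by
    rw [Measure.prod_restrict, Measure.volume_eq_prod]
  haveI hfin : IsFiniteMeasure ((volume : Measure (ℝ×ℝ)).restrict (Ioo (0:ℝ) 1 ×ˢ Ioo (0:ℝ) 1)) := by
    constructor
    rw [Measure.restrict_apply_univ]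
    refine lt_of_le_of_lt (measure_mono (prod_mono Ioo_subset_Icc_self Ioo_subset_Icc_self)) ?_
    exact (isCompact_Icc.prod isCompact_Icc).measure_lt_top
  have hpInt : Integrable p ((volume : Measure (ℝ×ℝ)).restrict (Ioo (0:ℝ) 1 ×ˢ Ioo (0:ℝ) 1)) :=
    hp.integrable one_le_two
  have hFint : Integrable (fun z : ℝ×ℝ => q z.2 * p z)
      ((volume.restrict (Ioo (0:ℝ) 1)).prod (volume.restrict (Ioo (0:ℝ) 1))) := by
    rw [← hμprod]
    exact hpInt.bdd_mul ((hq_meas.comp measurable_snd).aestronglyMeasurable)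
      (Filter.Eventually.of_forall fun z => hq_bdd z.2)
  have h3int : Integrable (fun x => ∫ y in Ioo (0:ℝ) 1, q y * p (x, y))
      (volume.restrict (Ioo (0:ℝ) 1)) := hFint.integral_prod_left
  have hswap : ∫ x in Ioo (0:ℝ) 1, (∫ y in Ioo (0:ℝ) 1, q y * p (x, y))
      = ∫ y in Ioo (0:ℝ) 1, (∫ x in Ioo (0:ℝ) 1, q y * p (x, y)) :=
    integral_integral_swap (f := fun x y => q y * p (x, y)) hFint
  have hT3val : ∫ x in Ioo (0:ℝ) 1, (∫ y in Ioo (0:ℝ) 1, q y * p (x, y)) = I := by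
    rw [hswap, hIq]
    refine integral_congr_ae ?_
    filter_upwards [hpnorm] with y hy
    rw [integral_const_mul, hy, mul_one]
  have hinner_eq : ∀ x : ℝ, (∫ y in Ioo (0:ℝ) 1, chi α y * n y * p (x, y))
      = ∫ y in Ioo (0:ℝ) 1, q y * p (x, y) := by
    intro x
    refine setIntegral_congr_fun measurableSet_Ioo fun y hy => ?_
    rw [hq]; simp only [hNn y (hIccsub hy)]
  -- integrability of the pieces
  have hnInt : IntegrableOn n (Ioo (0:ℝ) 1) := (hnc.integrableOn_Icc).mono_set hIccsub
  have e1 : Integrable (fun x => chi α x * (b*R-d) * n x) (volume.restrict (Ioo (0:ℝ) 1)) := by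
    refine hnInt.bdd_mul (c := |b*R-d|) (((chi_meas α).mul measurable_const).aestronglyMeasurable) ?_
    refine Filter.Eventually.of_forall fun x => ?_
    rw [Real.norm_eq_abs, abs_mul]
    exact mul_le_mul_of_nonneg_right (by simpa using abs_chi_le_one α x) (abs_nonneg _) |>.trans
      (by rw [one_mul])
  have e2 : Integrable (fun x => μ * b * R * chi α x * n x) (volume.restrict (Ioo (0:ℝ) 1)) := by
    refine hnInt.bdd_mul (c := |μ*b*R|) ((measurable_const.mul (chi_meas α)).aestronglyMeasurable) ?_
    refine Filter.Eventually.of_forall fun x => ?_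
    rw [Real.norm_eq_abs, abs_mul]
    nlinarith [abs_chi_le_one α x, abs_nonneg (μ*b*R), abs_nonneg (chi α x)]
  have e3 : Integrable (fun x => μ * b * R * (∫ y in Ioo (0:ℝ) 1, q y * p (x, y)))
      (volume.restrict (Ioo (0:ℝ) 1)) := h3int.const_mul _
  have e4 : Integrable (fun x => v' x * n x + v x * n' x) (volume.restrict (Ioo (0:ℝ) 1)) :=
    (((hv'c.mul hnc).add (hvc.mul hn'c)).integrableOn_Icc).mono_set hIccsub
  have e5 : Integrable (fun x => m * g x) (volume.restrict (Ioo (0:ℝ) 1)) := hg.const_mul m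
  -- the integrated equation
  have hE : (∫ x in Ioo (0:ℝ) 1, (chi α x * (b * R - d) * n x - μ * b * R * chi α x * n x
          + μ * b * R * (∫ y in Ioo (0:ℝ) 1, q y * p (x, y))
          - (v' x * n x + v x * n' x) + m * g x)) = 0 := by
    refine integral_eq_zero_of_ae ?_
    filter_upwards [hss_n] with x hx
    rw [hinner_eq x] at hx
    exact hx.symm
  have e12 : Integrable (fun x => chi α x * (b * R - d) * n x - μ * b * R * chi α x * n x)
      (volume.restrict (Ioo (0:ℝ) 1)) := e1.sub e2
  have e123 : Integrable (fun x => chi α x * (b * R - d) * n x - μ * b * R * chi α x * n x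
      + μ * b * R * (∫ y in Ioo (0:ℝ) 1, q y * p (x, y)))
      (volume.restrict (Ioo (0:ℝ) 1)) := e12.add e3
  have e1234 : Integrable (fun x => chi α x * (b * R - d) * n x - μ * b * R * chi α x * n x
      + μ * b * R * (∫ y in Ioo (0:ℝ) 1, q y * p (x, y)) - (v' x * n x + v x * n' x))
      (volume.restrict (Ioo (0:ℝ) 1)) := e123.sub e4
  rw [integral_add e1234 e5, integral_sub e123 e4, integral_add e12 e3,
      integral_sub e1 e2] at hE
  -- values of the pieces
  have v1 : ∫ x in Ioo (0:ℝ) 1, chi α x * (b*R-d) * n x = (b*R-d) * I := by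
    rw [hI, ← integral_const_mul]
    exact integral_congr_ae (Filter.Eventually.of_forall fun x => by ring)
  have v2 : ∫ x in Ioo (0:ℝ) 1, μ * b * R * chi α x * n x = μ*b*R * I := by
    rw [hI, ← integral_const_mul]
    exact integral_congr_ae (Filter.Eventually.of_forall fun x => by ring)
  have v3 : ∫ x in Ioo (0:ℝ) 1, μ * b * R * (∫ y in Ioo (0:ℝ) 1, q y * p (x, y)) = μ*b*R * I := by
    rw [integral_const_mul, hT3val]
  have v4 : ∫ x in Ioo (0:ℝ) 1, (v' x * n x + v x * n' x) = 0 := by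
    have hw : ∀ t ∈ Ioo (0:ℝ) 1, HasDerivAt (fun y => v y * n y) (v' t * n t + v t * n' t) t :=
      fun t ht => ((hv t (hIccsub ht)).mul (hn t (hIccsub ht))).hasDerivAt
        (Icc_mem_nhds ht.1 ht.2)
    have hFTC := intervalIntegral.integral_eq_sub_of_hasDeriv_right_of_le zero_le_one
      (hvc.mul hnc) (fun t ht => (hw t ht).hasDerivWithinAt)
      (((hv'c.mul hnc).add (hvc.mul hn'c)).mono (by rw [uIcc_of_le zero_le_one])
        |>.intervalIntegrable)
    rw [Pi.mul_apply, Pi.mul_apply, hv1, hv0, zero_mul, zero_mul, sub_zero] at hFTC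
    rw [← integral_Ioc_eq_integral_Ioo, ← intervalIntegral.integral_of_le zero_le_one, hFTC]
  have v5 : ∫ x in Ioo (0:ℝ) 1, m * g x = 0 := by
    rw [integral_const_mul]
    have h1 := hac 1 (right_mem_Icc.2 zero_le_one)
    rw [hnb1, hnb0, zero_add] at h1
    rw [← integral_Ioc_eq_integral_Ioo, ← intervalIntegral.integral_of_le zero_le_one, ← h1,
      mul_zero]
  rw [v1, v2, v3, v4, v5] at hE
  -- R is below d/b, hence I = 0
  have hηint : θ = η * R + b * R * I := by rw [hI] at hss_R ⊢; linarith
  have hRle : R ≤ θ / η := by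
    have h1 : 0 ≤ b * R * I := mul_nonneg (mul_nonneg hb.le hR) hInonneg
    rw [le_div_iff₀ hη]
    linarith
  have hbRd : b * R - d < 0 := by
    have h2 : θ / η < d / b := hthresh
    have h3 : R < d / b := lt_of_le_of_lt hRle h2
    have := (lt_div_iff₀ hb).1 h3
    linarith
  have hI0 : I = 0 := by
    rcases mul_eq_zero.1 (by linarith : (b*R-d) * I = 0) with h | h
    · exact absurd h (by linarith)
    · exact h
  have hRval : R = θ / η := by
    rw [hI0, mul_zero, add_zero] at hηint
    rw [eq_div_iff hη.ne']
    linarith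
  -- Part 2: n vanishes on [0, α]
  have hchiNint : Integrable (fun x => chi α x * n x) (volume.restrict (Ioo (0:ℝ) 1)) := by
    refine hnInt.bdd_mul (c := 1) ((chi_meas α).aestronglyMeasurable) ?_
    exact Filter.Eventually.of_forall fun x => by simpa using abs_chi_le_one α x
  have hae0 : (fun x => chi α x * n x) =ᵐ[volume.restrict (Ioo (0:ℝ) 1)] 0 := by
    refine (integral_eq_zero_iff_of_nonneg_ae ?_ hchiNint).1 (by rw [← hI]; exact hI0)
    refine (ae_restrict_iff' measurableSet_Ioo).2 (Filter.Eventually.of_forall fun x hx =>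
      mul_nonneg (chi_nonneg α x) (hnpos x (hIccsub hx)))
  have hnullset : volume {x : ℝ | x ∈ Ioo (0:ℝ) 1 ∧ ¬ (chi α x * n x = 0)} = 0 := by
    have h1 : ∀ᵐ x ∂(volume.restrict (Ioo (0:ℝ) 1)), chi α x * n x = 0 := by
      filter_upwards [hae0] with x hx; simpa using hx
    have h2 := (ae_restrict_iff' measurableSet_Ioo).1 h1
    rw [ae_iff] at h2
    have h3 : {x : ℝ | x ∈ Ioo (0:ℝ) 1 ∧ ¬ (chi α x * n x = 0)}
        = {x : ℝ | ¬ (x ∈ Ioo (0:ℝ) 1 → chi α x * n x = 0)} := by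
      ext x; simp only [mem_setOf_eq, Classical.not_imp]
    rw [h3]; exact h2
  have hzero1 : ∀ x ∈ Ioo (0:ℝ) α, n x = 0 := by
    by_contra hcon
    push_neg at hcon
    obtain ⟨x0, hx0, hx0ne⟩ := hcon
    have hx0' : x0 ∈ Ioo (0:ℝ) 1 := ⟨hx0.1, hx0.2.trans hα1⟩
    have hpos : 0 < n x0 := lt_of_le_of_ne (hnpos x0 (hIccsub hx0')) (Ne.symm hx0ne)
    have hca : ContinuousAt n x0 := hnc.continuousAt (Icc_mem_nhds hx0'.1 hx0'.2)
    have hU : {y : ℝ | 0 < n y} ∩ Ioo 0 α ∈ 𝓝 x0 :=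
      Filter.inter_mem (hca (Ioi_mem_nhds hpos)) (Ioo_mem_nhds hx0.1 hx0.2)
    obtain ⟨ε, hε, hball⟩ := Metric.mem_nhds_iff.1 hU
    have hsub : Metric.ball x0 ε ⊆ {x : ℝ | x ∈ Ioo (0:ℝ) 1 ∧ ¬ (chi α x * n x = 0)} := by
      intro y hy
      obtain ⟨hy1, hy2⟩ := hball hy
      refine ⟨⟨hy2.1, hy2.2.trans hα1⟩, ?_⟩
      rw [chi_of_lt hy2.2, one_mul]
      exact ne_of_gt hy1
    have hz : volume (Metric.ball x0 ε) = 0 := measure_mono_null hsub hnullset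
    exact absurd hz (ne_of_gt (Metric.measure_ball_pos volume x0 hε))
  have hIcc0α : Icc (0:ℝ) α ⊆ Icc 0 1 := Icc_subset_Icc le_rfl hα1.le
  have hzeroIcc : ∀ x ∈ Icc (0:ℝ) α, n x = 0 := by
    have h1 : EqOn N (fun _ => (0:ℝ)) (Ioo 0 α) := fun x hx => by
      rw [hNn x (hIcc0α (Ioo_subset_Icc_self hx))]; exact hzero1 x hx
    have h2 := h1.closure hNc continuous_const
    rw [closure_Ioo hα0.ne] at h2
    intro x hx
    rw [← hNn x (hIcc0α hx)]
    exact h2 hx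
  have hn'0 : ∀ x ∈ Ioo (0:ℝ) α, n' x = 0 := by
    intro x hx
    have hx1 : x ∈ Ioo (0:ℝ) 1 := ⟨hx.1, hx.2.trans hα1⟩
    have h1 : HasDerivAt n (n' x) x :=
      (hn x (hIccsub hx1)).hasDerivAt (Icc_mem_nhds hx1.1 hx1.2)
    have h2 : HasDerivAt n 0 x := by
      have heq : n =ᶠ[𝓝 x] fun _ => (0:ℝ) := by
        filter_upwards [Ioo_mem_nhds hx.1 hx.2] with y hy
        exact hzero1 y hy
      exact (hasDerivAt_const x (0:ℝ)).congr_of_eventuallyEq heq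
    exact h1.unique h2
  have hn'α : n' α = 0 := by
    have hne : (𝓝[Ioo (0:ℝ) α] α).NeBot := by
      rw [← mem_closure_iff_nhdsWithin_neBot, closure_Ioo hα0.ne]
      exact right_mem_Icc.2 hα0.le
    have h1 : Filter.Tendsto n' (𝓝[Ioo (0:ℝ) α] α) (𝓝 (n' α)) :=
      (hn'c α ⟨hα0.le, hα1.le⟩).mono
        (fun y hy => hIccsub ⟨hy.1, hy.2.trans hα1⟩)
    have h2 : Filter.Tendsto n' (𝓝[Ioo (0:ℝ) α] α) (𝓝 0) := by
      refine Filter.Tendsto.congr' ?_ tendsto_const_nhds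
      filter_upwards [self_mem_nhdsWithin] with y hy
      exact (hn'0 y hy).symm
    exact tendsto_nhds_unique h1 h2
  -- Part 3: the reduced equation on (α, 1] and Gronwall
  have hchin0 : ∀ y ∈ Ioo (0:ℝ) 1, chi α y * n y = 0 := by
    intro y hy
    rcases lt_or_ge y α with h | h
    · rw [hzeroIcc y ⟨hy.1.le, h.le⟩, mul_zero]
    · rw [chi_of_ge h, zero_mul]
  have hinner0 : ∀ x : ℝ, (∫ y in Ioo (0:ℝ) 1, chi α y * n y * p (x, y)) = 0 := by
    intro x
    rw [setIntegral_congr_fun (g := fun _ => (0:ℝ)) measurableSet_Ioo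
      (fun y hy => by rw [hchin0 y hy, zero_mul])]
    exact integral_zero _ _
  have hred : ∀ᵐ x ∂(volume : Measure ℝ), x ∈ Ioc α 1 → m * g x = v' x * n x + v x * n' x := by
    have h1 := (ae_restrict_iff' measurableSet_Ioo).1 hss_n
    have h2 : ∀ᵐ x : ℝ ∂volume, x ∉ ({1} : Set ℝ) := compl_mem_ae_iff.2 (measure_singleton 1)
    filter_upwards [h1, h2] with x hx hx1 hxm
    have hxI : x ∈ Ioo (0:ℝ) 1 :=
      ⟨lt_trans hα0 hxm.1, lt_of_le_of_ne hxm.2 (by simpa using hx1)⟩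
    have h3 := hx hxI
    rw [chi_of_ge hxm.1.le, hinner0 x] at h3
    simp only [zero_mul, mul_zero, zero_sub, zero_add] at h3
    linarith
  have hkey : ∀ x ∈ Icc α 1, m * n' x = v x * n x := by
    intro x hx
    have hx01 : x ∈ Icc (0:ℝ) 1 := ⟨hα0.le.trans hx.1, hx.2⟩
    have hiv : ∀ t ∈ Icc (0:ℝ) 1, IntervalIntegrable g volume 0 t := by
      intro t ht
      rw [intervalIntegrable_iff_integrableOn_Ioc_of_le ht.1]
      exact (integrableOn_Ioc_iff_integrableOn_Ioo (f := g) (b := t)).2 (hg.mono_set (Ioo_subset_Ioo le_rfl ht.2))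
    have hsub : n' x = ∫ s in α..x, g s := by
      have h1 := hac x hx01
      have h2 := hac α ⟨hα0.le, hα1.le⟩
      rw [hnb0, zero_add] at h1 h2
      rw [hn'α] at h2
      have h3 := intervalIntegral.integral_interval_sub_left (hiv x hx01)
        (hiv α ⟨hα0.le, hα1.le⟩)
      rw [h1]
      linarith
    have hmg : (∫ s in α..x, m * g s) = ∫ s in α..x, (v' s * n s + v s * n' s) := by
      refine intervalIntegral.integral_congr_ae ?_
      have huIoc : Ι α x = Ioc α x := uIoc_of_le hx.1
      filter_upwards [hred] with t ht htm
      rw [huIoc] at htm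
      exact ht ⟨htm.1, htm.2.trans hx.2⟩
    have hFTC : (∫ s in α..x, (v' s * n s + v s * n' s)) = v x * n x - v α * n α := by
      refine intervalIntegral.integral_eq_sub_of_hasDeriv_right_of_le hx.1
        ((hvc.mul hnc).mono (Icc_subset_Icc hα0.le hx.2)) ?_ ?_
      · intro t ht
        have ht1 : t ∈ Ioo (0:ℝ) 1 := ⟨lt_trans hα0 ht.1, lt_of_lt_of_le ht.2 hx.2⟩
        exact (((hv t (hIccsub ht1)).mul (hn t (hIccsub ht1))).hasDerivAt
          (Icc_mem_nhds ht1.1 ht1.2)).hasDerivWithinAt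
      · refine (((hv'c.mul hnc).add (hvc.mul hn'c)).mono ?_).intervalIntegrable
        rw [uIcc_of_le hx.1]
        exact Icc_subset_Icc hα0.le hx.2
    rw [hzeroIcc α (right_mem_Icc.2 hα0.le), mul_zero, sub_zero] at hFTC
    calc m * n' x = ∫ s in α..x, m * g s := by
          rw [hsub, intervalIntegral.integral_const_mul]
      _ = v x * n x := by rw [hmg, hFTC]
  obtain ⟨Cv, hCv⟩ := isCompact_Icc.exists_bound_of_continuousOn hvc
  have hIccα1 : Icc α 1 ⊆ Icc (0:ℝ) 1 := Icc_subset_Icc hα0.le le_rfl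
  have hzero2 : ∀ x ∈ Icc α 1, n x = 0 := by
    have hder : ∀ x ∈ Ico α 1, HasDerivWithinAt n (n' x) (Ici x) x := by
      intro x hx
      exact ((hn x (hIccα1 ⟨hx.1, hx.2.le⟩)).mono
        (Icc_subset_Icc (hα0.le.trans hx.1) le_rfl)).mono_of_mem_nhdsWithin
        (Icc_mem_nhdsGE_of_mem ⟨le_rfl, hx.2⟩)
    have hbound : ∀ x ∈ Ico α 1, ‖n' x‖ ≤ (Cv/m) * ‖n x‖ + 0 := by
      intro x hx
      have h1 := hkey x ⟨hx.1, hx.2.le⟩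
      have h2 : n' x = v x * n x / m := by field_simp; linarith
      have h3 := hCv x (hIccα1 ⟨hx.1, hx.2.le⟩)
      rw [h2, add_zero, norm_div, norm_mul, Real.norm_eq_abs m, abs_of_pos hm,
        div_mul_eq_mul_div]
      gcongr
    have hmain := norm_le_gronwallBound_of_norm_deriv_right_le (δ := 0) (ε := 0) (K := Cv/m) (hnc.mono hIccα1) hder
      (by rw [hzeroIcc α (right_mem_Icc.2 hα0.le)]; simp) hbound
    intro x hx
    have h4 := hmain x hx
    rw [gronwallBound_ε0_δ0] at h4
    exact norm_le_zero_iff.1 h4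
  refine ⟨fun x hx => ?_, hRval⟩
  rcases le_total x α with h | h
  · exact hzeroIcc x ⟨hx.1, h⟩
  · exact hzero2 x ⟨h, hx.2⟩
end

section
/- Let b, m > 0, d ∈ ℝ, μ ∈ [0,1], α ∈ (0,1), let v ∈ C¹([0,1]) with v(0) = v(1) = 0, let p ∈ L²((0,1)×(0,1)) with p ≥ 0 a.e., and let R₁, R₂, s₁, s₂ ∈ ℝ. Suppose φ, ψ : [0,1] → ℝ are C¹ with φ'(0) = φ'(1) = ψ'(0) = ψ'(1) = 0 and have integrable second derivatives g_φ, g_ψ (i.e. φ'(x) = φ'(0) + ∫₀ˣ g_φ and ψ'(x) = ψ'(0) + ∫₀ˣ g_ψ), satisfying for a.e. x ∈ (0,1): m g_φ(x) − (vφ)'(x) − d χ_α(x) φ(x) + b R₁ (Nφ)(x) = s₁ φ(x), and m g_ψ(x) + v(x) ψ'(x) − d χ_α(x) ψ(x) + b R₂ (N*ψ)(x) = s₂ ψ(x), where (Nφ)(x) = (1−μ)χ_α(x)φ(x) + μ∫₀¹ χ_α(y)φ(y)p(x,y)dy and (N*ψ)(x) = (1−μ)χ_α(x)ψ(x) + μχ_α(x)∫₀¹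 p(y,x)ψ(y)dy. Then (s₂ − s₁) ∫₀¹ φ(x)ψ(x) dx = b (R₂ − R₁) ∫₀¹ (Nφ)(x) ψ(x) dx. -/
open MeasureTheory Set

/-- The nonlocal operator `(Nφ)(x) = (1−μ)χ_α(x)φ(x) + μ∫₀¹ χ_α(y)φ(y)p(x,y) dy`. -/
noncomputable def Nop (α μ : ℝ) (p : ℝ × ℝ → ℝ) (φ : ℝ → ℝ) (x : ℝ) : ℝ :=
  (1 - μ) * chi α x * φ x + μ * ∫ y in Set.Ioo (0:ℝ) 1, chi α y * φ y * p (x, y)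

/-- The adjoint `(N*ψ)(x) = (1−μ)χ_α(x)ψ(x) + μχ_α(x)∫₀¹ p(y,x)ψ(y) dy`. -/
noncomputable def NopStar (α μ : ℝ) (p : ℝ × ℝ → ℝ) (ψ : ℝ → ℝ) (x : ℝ) : ℝ :=
  (1 - μ) * chi α x * ψ x + μ * chi α x * ∫ y in Set.Ioo (0:ℝ) 1, p (y, x) * ψ y

noncomputable def clampI (x : ℝ) : ℝ := max 0 (min 1 x)

lemma clampI_mem (x : ℝ) : clampI x ∈ Icc (0:ℝ) 1 :=
  ⟨le_max_left _ _, max_le zero_le_one (min_le_left _ _)⟩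

lemma clampI_eq {x : ℝ} (hx : x ∈ Icc (0:ℝ) 1) : clampI x = x := by
  simp [clampI, min_eq_right hx.2, max_eq_right hx.1]

lemma continuous_clampI : Continuous clampI :=
  continuous_const.max (continuous_const.min continuous_id)

lemma cont_clamp {f : ℝ → ℝ} (hf : ContinuousOn f (Icc 0 1)) :
    Continuous (fun x => f (clampI x)) :=
  hf.comp_continuous continuous_clampI clampI_mem

lemma bound_clamp {f : ℝ → ℝ} (hf : ContinuousOn f (Icc 0 1)) :
    ∃ C : ℝ, 0 ≤ C ∧ ∀ x, ‖f (clampI x)‖ ≤ C := by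
  obtain ⟨C, hC⟩ := isCompact_Icc.exists_bound_of_continuousOn hf
  exact ⟨max C 0, le_max_right _ _,
    fun x => le_trans (hC _ (clampI_mem x)) (le_max_left _ _)⟩

lemma finmeasI : IsFiniteMeasure (volume.restrict (Ioo (0:ℝ) 1)) := by
  constructor
  rw [Measure.restrict_apply_univ, Real.volume_Ioo]
  exact ENNReal.ofReal_lt_top

lemma int_mul_cont {g w : ℝ → ℝ} (hg : IntegrableOn g (Ioo 0 1))
    (hw : ContinuousOn w (Icc 0 1)) :
    IntegrableOn (fun x => g x * w x) (Ioo (0:ℝ) 1) := by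
  obtain ⟨C, hC0, hC⟩ := bound_clamp hw
  have h1 : Integrable (fun x => w (clampI x) * g x) (volume.restrict (Ioo (0:ℝ) 1)) :=
    hg.bdd_mul ((cont_clamp hw).aestronglyMeasurable) (Filter.Eventually.of_forall hC)
  refine h1.congr ?_
  filter_upwards [ae_restrict_mem measurableSet_Ioo] with x hx
  rw [clampI_eq (Ioo_subset_Icc_self hx), mul_comm]

lemma ftc_sub {w w' : ℝ → ℝ}
    (hw : ∀ x ∈ Icc (0:ℝ) 1, HasDerivWithinAt w (w' x) (Icc 0 1) x)
    (hw'c : ContinuousOn w' (Icc 0 1)) {s : ℝ} (hs0 : 0 ≤ s) (hs1 : s ≤ 1) :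
    ∫ x in Ioo s 1, w' x = w 1 - w s := by
  have hwc : ContinuousOn w (Icc 0 1) := fun x hx => (hw x hx).continuousWithinAt
  rw [← integral_Ioc_eq_integral_Ioo, ← intervalIntegral.integral_of_le hs1]
  refine intervalIntegral.integral_eq_sub_of_hasDeriv_right_of_le hs1
    (hwc.mono (Icc_subset_Icc hs0 le_rfl)) (fun x hx => ?_)
    ((hw'c.mono (Icc_subset_Icc hs0 le_rfl)).intervalIntegrable_of_Icc hs1)
  have hxI : x ∈ Icc (0:ℝ) 1 := ⟨le_of_lt (lt_of_le_of_lt hs0 hx.1), hx.2.le⟩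
  exact (((hw x hxI).hasDerivAt
    (Icc_mem_nhds (lt_of_le_of_lt hs0 hx.1) hx.2)).hasDerivWithinAt)

lemma ibp_primitive (g w w' : ℝ → ℝ) (hg : IntegrableOn g (Ioo 0 1))
    (hw : ∀ x ∈ Icc (0:ℝ) 1, HasDerivWithinAt w (w' x) (Icc 0 1) x)
    (hw'c : ContinuousOn w' (Icc 0 1)) :
    (∫ x in Ioo (0:ℝ) 1, (∫ s in (0:ℝ)..x, g s) * w' x)
      = (∫ s in (0:ℝ)..1, g s) * w 1 - ∫ x in Ioo (0:ℝ) 1, g x * w x := by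
  haveI := finmeasI
  obtain ⟨C, hC0, hC⟩ := bound_clamp hw'c
  set f : ℝ → ℝ → ℝ := fun x s => (if s < x then (1:ℝ) else 0) * (g s * w' (clampI x))
    with hf
  have hwc : ContinuousOn w (Icc 0 1) := fun x hx => (hw x hx).continuousWithinAt
  have hbase : Integrable (fun z : ℝ × ℝ => g z.2)
      ((volume.restrict (Ioo (0:ℝ) 1)).prod (volume.restrict (Ioo (0:ℝ) 1))) := by
    have := (integrable_const (1:ℝ) (μ := volume.restrict (Ioo (0:ℝ) 1))).mul_prod hg
    simpa using this
  have hFmeas : AEStronglyMeasurable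
      (fun z : ℝ × ℝ => (if z.2 < z.1 then (1:ℝ) else 0) * w' (clampI z.1))
      ((volume.restrict (Ioo (0:ℝ) 1)).prod (volume.restrict (Ioo (0:ℝ) 1))) := by
    refine Measurable.aestronglyMeasurable ?_
    exact ((measurable_const.ite (measurableSet_lt measurable_snd measurable_fst)
      measurable_const).mul (((cont_clamp hw'c).comp continuous_fst).measurable))
  have hInt : Integrable (Function.uncurry f)
      ((volume.restrict (Ioo (0:ℝ) 1)).prod (volume.restrict (Ioo (0:ℝ) 1))) := by
    have h1 : Integrable (fun z : ℝ × ℝ =>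
        ((if z.2 < z.1 then (1:ℝ) else 0) * w' (clampI z.1)) * g z.2)
        ((volume.restrict (Ioo (0:ℝ) 1)).prod (volume.restrict (Ioo (0:ℝ) 1))) := by
      refine hbase.bdd_mul (c := C) hFmeas (Filter.Eventually.of_forall fun z => ?_)
      calc ‖(if z.2 < z.1 then (1:ℝ) else 0) * w' (clampI z.1)‖
          = ‖(if z.2 < z.1 then (1:ℝ) else 0)‖ * ‖w' (clampI z.1)‖ := norm_mul _ _
        _ ≤ 1 * C := by
            refine mul_le_mul ?_ (hC _) (norm_nonneg _) zero_le_one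
            split <;> simp
        _ = C := one_mul C
    refine h1.congr (Filter.Eventually.of_forall fun z => ?_)
    show _ = Function.uncurry f z
    simp only [Function.uncurry, hf]
    ring
  have hswap := integral_integral_swap hInt
  have hL : ∀ x ∈ Ioo (0:ℝ) 1,
      (∫ s in Ioo (0:ℝ) 1, f x s) = (∫ s in (0:ℝ)..x, g s) * w' x := by
    intro x hx
    have e1 : (fun s => f x s)
        = Set.indicator (Iio x) (fun s => g s * w' (clampI x)) := by
      funext s
      simp only [hf, Set.indicator, mem_Iio]
      split <;> simp
    rw [e1, setIntegral_indicator measurableSet_Iio, Ioo_inter_Iio,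
      min_eq_right hx.2.le, integral_mul_const,
      clampI_eq (Ioo_subset_Icc_self hx),
      intervalIntegral.integral_of_le hx.1.le, integral_Ioc_eq_integral_Ioo]
  have hR : ∀ s ∈ Ioo (0:ℝ) 1,
      (∫ x in Ioo (0:ℝ) 1, f x s) = g s * (w 1 - w s) := by
    intro s hs
    have e1 : (fun x => f x s)
        = Set.indicator (Ioi s) (fun x => g s * w' (clampI x)) := by
      funext x
      simp only [hf, Set.indicator, mem_Ioi]
      split <;> simp
    rw [e1, setIntegral_indicator measurableSet_Ioi, Ioo_inter_Ioi,
      max_eq_right hs.1.le, integral_const_mul]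
    congr 1
    rw [← ftc_sub hw hw'c hs.1.le hs.2.le]
    refine setIntegral_congr_fun measurableSet_Ioo fun x hx => ?_
    rw [clampI_eq ⟨le_of_lt (lt_trans hs.1 hx.1), hx.2.le⟩]
  have e2 : ∫ x in Ioo (0:ℝ) 1, (∫ s in Ioo (0:ℝ) 1, f x s)
      = ∫ x in Ioo (0:ℝ) 1, (∫ s in (0:ℝ)..x, g s) * w' x :=
    setIntegral_congr_fun measurableSet_Ioo hL
  have e3 : ∫ s in Ioo (0:ℝ) 1, (∫ x in Ioo (0:ℝ) 1, f x s)
      = ∫ s in Ioo (0:ℝ) 1, g s * (w 1 - w s) :=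
    setIntegral_congr_fun measurableSet_Ioo hR
  have e4 : ∫ s in Ioo (0:ℝ) 1, g s * (w 1 - w s)
      = (∫ s in (0:ℝ)..1, g s) * w 1 - ∫ x in Ioo (0:ℝ) 1, g x * w x := by
    have hsplit : (fun s => g s * (w 1 - w s))
        = fun s => g s * w 1 - g s * w s := by funext s; ring
    rw [hsplit, integral_sub (hg.mul_const (w 1)) (int_mul_cont hg hwc),
      integral_mul_const, intervalIntegral.integral_of_le zero_le_one,
      integral_Ioc_eq_integral_Ioo]
  rw [← e2, hswap, e3, e4]


/-- Eigenvalue-gap duality identity: if `φ` is an eigenfunction of `L_{R₁} = A + bR₁N`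
with eigenvalue `s₁`, and `ψ` an eigenfunction of `L_{R₂}* = A* + bR₂N*` with
eigenvalue `s₂`, then `(s₂ − s₁)∫₀¹ φψ = b(R₂ − R₁)∫₀¹ (Nφ)ψ`. -/
theorem stmt_18 (b m d μ α R₁ R₂ s₁ s₂ : ℝ) (hb : 0 < b) (hm : 0 < m)
    (hμ : μ ∈ Set.Icc (0:ℝ) 1) (hα : α ∈ Set.Ioo (0:ℝ) 1)
    (v v' : ℝ → ℝ)
    (hv : ∀ x ∈ Set.Icc (0:ℝ) 1, HasDerivWithinAt v (v' x) (Set.Icc 0 1) x)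
    (hv'c : ContinuousOn v' (Set.Icc 0 1))
    (hv0 : v 0 = 0) (hv1 : v 1 = 0)
    (p : ℝ × ℝ → ℝ)
    (hp : MemLp p 2 (volume.restrict ((Set.Ioo (0:ℝ) 1) ×ˢ (Set.Ioo (0:ℝ) 1))))
    (hp0 : ∀ᵐ z ∂(volume.restrict ((Set.Ioo (0:ℝ) 1) ×ˢ (Set.Ioo (0:ℝ) 1))), 0 ≤ p z)
    (φ φ' gφ ψ ψ' gψ : ℝ → ℝ)
    (hφ : ∀ x ∈ Set.Icc (0:ℝ) 1, HasDerivWithinAt φ (φ' x) (Set.Icc 0 1) x)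
    (hφ'c : ContinuousOn φ' (Set.Icc 0 1))
    (hφb0 : φ' 0 = 0) (hφb1 : φ' 1 = 0)
    (hgφ : IntegrableOn gφ (Set.Ioo (0:ℝ) 1))
    (hφac : ∀ x ∈ Set.Icc (0:ℝ) 1, φ' x = φ' 0 + ∫ s in (0:ℝ)..x, gφ s)
    (hψ : ∀ x ∈ Set.Icc (0:ℝ) 1, HasDerivWithinAt ψ (ψ' x) (Set.Icc 0 1) x)
    (hψ'c : ContinuousOn ψ' (Set.Icc 0 1))
    (hψb0 : ψ' 0 = 0) (hψb1 : ψ' 1 = 0)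
    (hgψ : IntegrableOn gψ (Set.Ioo (0:ℝ) 1))
    (hψac : ∀ x ∈ Set.Icc (0:ℝ) 1, ψ' x = ψ' 0 + ∫ s in (0:ℝ)..x, gψ s)
    (heigφ : ∀ᵐ x ∂(volume.restrict (Set.Ioo (0:ℝ) 1)),
      m * gφ x - (v' x * φ x + v x * φ' x) - d * chi α x * φ x
        + b * R₁ * Nop α μ p φ x = s₁ * φ x)
    (heigψ : ∀ᵐ x ∂(volume.restrict (Set.Ioo (0:ℝ) 1)),
      m * gψ x + v x * ψ' x - d * chi α x * ψ x
        + b * R₂ * NopStar α μ p ψ x = s₂ * ψ x) :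
    (s₂ - s₁) * ∫ x in Set.Ioo (0:ℝ) 1, φ x * ψ x
      = b * (R₂ - R₁) * ∫ x in Set.Ioo (0:ℝ) 1, Nop α μ p φ x * ψ x := by
  haveI := finmeasI
  have hφcont : ContinuousOn φ (Icc 0 1) := fun x hx => (hφ x hx).continuousWithinAt
  have hψcont : ContinuousOn ψ (Icc 0 1) := fun x hx => (hψ x hx).continuousWithinAt
  have hvcont : ContinuousOn v (Icc 0 1) := fun x hx => (hv x hx).continuousWithinAt
  obtain ⟨Cφ, hCφ0, hCφ⟩ := bound_clamp hφcont
  obtain ⟨Cψ, hCψ0, hCψ⟩ := bound_clamp hψcont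
  have hχm : Measurable (chi α) := by
    unfold chi
    exact Measurable.ite measurableSet_Iio measurable_const measurable_const
  have hχb : ∀ x : ℝ, ‖chi α x‖ ≤ 1 := by
    intro x; unfold chi; split <;> simp
  -- basic integrabilities
  have IA1 : IntegrableOn (fun x => gφ x * ψ x) (Ioo (0:ℝ) 1) := int_mul_cont hgφ hψcont
  have IB1 : IntegrableOn (fun x => gψ x * φ x) (Ioo (0:ℝ) 1) := int_mul_cont hgψ hφcont
  have IA2 : IntegrableOn (fun x => (v' x * φ x + v x * φ' x) * ψ x) (Ioo (0:ℝ) 1) :=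
    ((((hv'c.mul hφcont).add (hvcont.mul hφ'c)).mul hψcont).integrableOn_Icc).mono_set
      Ioo_subset_Icc_self
  have IB2 : IntegrableOn (fun x => v x * ψ' x * φ x) (Ioo (0:ℝ) 1) :=
    (((hvcont.mul hψ'c).mul hφcont).integrableOn_Icc).mono_set Ioo_subset_Icc_self
  have Iφψ : IntegrableOn (fun x => φ x * ψ x) (Ioo (0:ℝ) 1) :=
    ((hφcont.mul hψcont).integrableOn_Icc).mono_set Ioo_subset_Icc_self
  have IA3 : IntegrableOn (fun x => chi α x * φ x * ψ x) (Ioo (0:ℝ) 1) := by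
    have h1 := Iφψ.bdd_mul (c := 1) (hχm.aestronglyMeasurable)
      (Filter.Eventually.of_forall hχb)
    refine h1.congr (Filter.Eventually.of_forall fun x => ?_)
    ring
  have IB3 : IntegrableOn (fun x => chi α x * ψ x * φ x) (Ioo (0:ℝ) 1) := by
    refine IA3.congr (Filter.Eventually.of_forall fun x => ?_)
    ring
  -- product measure facts
  have hprodI : (volume.restrict (Ioo (0:ℝ) 1)).prod (volume.restrict (Ioo (0:ℝ) 1))
      = volume.restrict ((Ioo (0:ℝ) 1) ×ˢ (Ioo (0:ℝ) 1)) := by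
    rw [Measure.prod_restrict, ← Measure.volume_eq_prod]
  have pInt : Integrable p
      ((volume.restrict (Ioo (0:ℝ) 1)).prod (volume.restrict (Ioo (0:ℝ) 1))) := by
    rw [hprodI]
    haveI : IsFiniteMeasure (volume.restrict ((Ioo (0:ℝ) 1) ×ˢ (Ioo (0:ℝ) 1))) := by
      rw [← hprodI]; exact inferInstance
    exact hp.integrable one_le_two
  -- integrability of the kernel with bounded factors
  have hGmeas : AEStronglyMeasurable
      (fun z : ℝ × ℝ => chi α z.2 * φ (clampI z.2) * ψ (clampI z.1))
      ((volume.restrict (Ioo (0:ℝ) 1)).prod (volume.restrict (Ioo (0:ℝ) 1))) := by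
    refine Measurable.aestronglyMeasurable ?_
    exact ((hχm.comp measurable_snd).mul
      ((cont_clamp hφcont).measurable.comp measurable_snd)).mul
      ((cont_clamp hψcont).measurable.comp measurable_fst)
  have hGbound : ∀ z : ℝ × ℝ, ‖chi α z.2 * φ (clampI z.2) * ψ (clampI z.1)‖ ≤ 1 * Cφ * Cψ := by
    intro z
    rw [norm_mul, norm_mul]
    refine mul_le_mul (mul_le_mul (hχb _) (hCφ _) (norm_nonneg _) zero_le_one)
      (hCψ _) (norm_nonneg _) ?_
    positivity
  have hGΨ : Integrable
      (fun z : ℝ × ℝ => (chi α z.2 * φ (clampI z.2) * ψ (clampI z.1)) * p z)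
      ((volume.restrict (Ioo (0:ℝ) 1)).prod (volume.restrict (Ioo (0:ℝ) 1))) :=
    pInt.bdd_mul (c := 1 * Cφ * Cψ) hGmeas (Filter.Eventually.of_forall hGbound)
  -- pointwise identities for the inner integrals
  have hpoint1 : ∀ x ∈ Ioo (0:ℝ) 1,
      (∫ y in Ioo (0:ℝ) 1, (chi α y * φ (clampI y) * ψ (clampI x)) * p (x, y))
        = (∫ y in Ioo (0:ℝ) 1, chi α y * φ y * p (x, y)) * ψ x := by
    intro x hx
    rw [clampI_eq (Ioo_subset_Icc_self hx), ← integral_mul_const]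
    refine setIntegral_congr_fun measurableSet_Ioo fun y hy => ?_
    rw [clampI_eq (Ioo_subset_Icc_self hy)]
    ring
  have hpoint2 : ∀ y ∈ Ioo (0:ℝ) 1,
      (∫ x in Ioo (0:ℝ) 1, (chi α y * φ (clampI y) * ψ (clampI x)) * p (x, y))
        = chi α y * (∫ x in Ioo (0:ℝ) 1, p (x, y) * ψ x) * φ y := by
    intro y hy
    rw [clampI_eq (Ioo_subset_Icc_self hy)]
    have hSx : (∫ x in Ioo (0:ℝ) 1, ψ (clampI x) * p (x, y))
        = ∫ x in Ioo (0:ℝ) 1, p (x, y) * ψ x := by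
      refine setIntegral_congr_fun measurableSet_Ioo fun x hx => ?_
      rw [clampI_eq (Ioo_subset_Icc_self hx)]; ring
    calc (∫ x in Ioo (0:ℝ) 1, (chi α y * φ y * ψ (clampI x)) * p (x, y))
        = ∫ x in Ioo (0:ℝ) 1, (chi α y * φ y) * (ψ (clampI x) * p (x, y)) := by
          refine setIntegral_congr_fun measurableSet_Ioo fun x hx => ?_; ring
      _ = (chi α y * φ y) * ∫ x in Ioo (0:ℝ) 1, ψ (clampI x) * p (x, y) :=
          integral_const_mul _ _
      _ = chi α y * (∫ x in Ioo (0:ℝ) 1, p (x, y) * ψ x) * φ y := by rw [hSx]; ring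
  -- integrability of the nonlocal terms
  have ITψ : IntegrableOn
      (fun x => (∫ y in Ioo (0:ℝ) 1, chi α y * φ y * p (x, y)) * ψ x) (Ioo (0:ℝ) 1) := by
    have h1 := hGΨ.integral_prod_left
    refine h1.congr ?_
    filter_upwards [ae_restrict_mem measurableSet_Ioo] with x hx
    exact hpoint1 x hx
  have ISφ : IntegrableOn
      (fun x => chi α x * (∫ y in Ioo (0:ℝ) 1, p (y, x) * ψ y) * φ x) (Ioo (0:ℝ) 1) := by
    have hswap : Integrable
        (fun z : ℝ × ℝ => (chi α z.1 * φ (clampI z.1) * ψ (clampI z.2)) * p (z.2, z.1))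
        ((volume.restrict (Ioo (0:ℝ) 1)).prod (volume.restrict (Ioo (0:ℝ) 1))) := by
      have := hGΨ.swap
      exact this
    have h1 := hswap.integral_prod_left
    refine h1.congr ?_
    filter_upwards [ae_restrict_mem measurableSet_Ioo] with x hx
    exact hpoint2 x hx
  have IA4 : IntegrableOn (fun x => Nop α μ p φ x * ψ x) (Ioo (0:ℝ) 1) := by
    have hfun : (fun x => Nop α μ p φ x * ψ x)
        = fun x => (1 - μ) * (chi α x * φ x * ψ x)
            + μ * ((∫ y in Ioo (0:ℝ) 1, chi α y * φ y * p (x, y)) * ψ x) := by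
      funext x; simp only [Nop]; ring
    rw [hfun]
    exact (IA3.const_mul _).add (ITψ.const_mul _)
  have IB4 : IntegrableOn (fun x => NopStar α μ p ψ x * φ x) (Ioo (0:ℝ) 1) := by
    have hfun : (fun x => NopStar α μ p ψ x * φ x)
        = fun x => (1 - μ) * (chi α x * ψ x * φ x)
            + μ * (chi α x * (∫ y in Ioo (0:ℝ) 1, p (y, x) * ψ y) * φ x) := by
      funext x; simp only [NopStar]; ring
    rw [hfun]
    exact (IB3.const_mul _).add (ISφ.const_mul _)
  -- Fubini symmetry of the nonlocal term
  have key : (∫ x in Ioo (0:ℝ) 1, (∫ y in Ioo (0:ℝ) 1, chi α y * φ y * p (x, y)) * ψ x)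
      = ∫ x in Ioo (0:ℝ) 1, chi α x * (∫ y in Ioo (0:ℝ) 1, p (y, x) * ψ y) * φ x := by
    have hsw := integral_integral_swap
      (f := fun x y => (chi α y * φ (clampI y) * ψ (clampI x)) * p (x, y))
      (μ := volume.restrict (Ioo (0:ℝ) 1)) (ν := volume.restrict (Ioo (0:ℝ) 1))
      (by exact hGΨ)
    calc (∫ x in Ioo (0:ℝ) 1, (∫ y in Ioo (0:ℝ) 1, chi α y * φ y * p (x, y)) * ψ x)
        = ∫ x in Ioo (0:ℝ) 1,
            ∫ y in Ioo (0:ℝ) 1, (chi α y * φ (clampI y) * ψ (clampI x)) * p (x, y) :=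
          (setIntegral_congr_fun measurableSet_Ioo fun x hx => (hpoint1 x hx)).symm
      _ = ∫ y in Ioo (0:ℝ) 1,
            ∫ x in Ioo (0:ℝ) 1, (chi α y * φ (clampI y) * ψ (clampI x)) * p (x, y) := hsw
      _ = ∫ y in Ioo (0:ℝ) 1, chi α y * (∫ x in Ioo (0:ℝ) 1, p (x, y) * ψ x) * φ y :=
          setIntegral_congr_fun measurableSet_Ioo fun y hy => hpoint2 y hy
  have hA3B3 : (∫ x in Ioo (0:ℝ) 1, chi α x * φ x * ψ x)
      = ∫ x in Ioo (0:ℝ) 1, chi α x * ψ x * φ x :=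
    setIntegral_congr_fun measurableSet_Ioo fun x _ => by ring
  have hA4B4 : (∫ x in Ioo (0:ℝ) 1, Nop α μ p φ x * ψ x)
      = ∫ x in Ioo (0:ℝ) 1, NopStar α μ p ψ x * φ x := by
    have hfun1 : (fun x => Nop α μ p φ x * ψ x)
        = fun x => (1 - μ) * (chi α x * φ x * ψ x)
            + μ * ((∫ y in Ioo (0:ℝ) 1, chi α y * φ y * p (x, y)) * ψ x) := by
      funext x; simp only [Nop]; ring
    have hfun2 : (fun x => NopStar α μ p ψ x * φ x)
        = fun x => (1 - μ) * (chi α x * ψ x * φ x)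
            + μ * (chi α x * (∫ y in Ioo (0:ℝ) 1, p (y, x) * ψ y) * φ x) := by
      funext x; simp only [NopStar]; ring
    rw [hfun1, hfun2,
      integral_add (IA3.const_mul _) (ITψ.const_mul _),
      integral_add (IB3.const_mul _) (ISφ.const_mul _),
      integral_const_mul, integral_const_mul, integral_const_mul, integral_const_mul,
      hA3B3, key]
  -- diffusion: integration by parts twice
  have hgφ0 : (∫ s in (0:ℝ)..1, gφ s) = 0 := by
    have := hφac 1 (by norm_num)
    rw [hφb0, hφb1, zero_add] at this
    exact this.symm
  have hgψ0 : (∫ s in (0:ℝ)..1, gψ s) = 0 := by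
    have := hψac 1 (by norm_num)
    rw [hψb0, hψb1, zero_add] at this
    exact this.symm
  have hibpφ : (∫ x in Ioo (0:ℝ) 1, φ' x * ψ' x)
      = - ∫ x in Ioo (0:ℝ) 1, gφ x * ψ x := by
    have h1 := ibp_primitive gφ ψ ψ' hgφ hψ hψ'c
    rw [hgφ0, zero_mul, zero_sub] at h1
    rw [← h1]
    refine setIntegral_congr_fun measurableSet_Ioo fun x hx => ?_
    rw [hφac x (Ioo_subset_Icc_self hx), hφb0, zero_add]
  have hibpψ : (∫ x in Ioo (0:ℝ) 1, ψ' x * φ' x)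
      = - ∫ x in Ioo (0:ℝ) 1, gψ x * φ x := by
    have h1 := ibp_primitive gψ φ φ' hgψ hφ hφ'c
    rw [hgψ0, zero_mul, zero_sub] at h1
    rw [← h1]
    refine setIntegral_congr_fun measurableSet_Ioo fun x hx => ?_
    rw [hψac x (Ioo_subset_Icc_self hx), hψb0, zero_add]
  have hA1B1 : (∫ x in Ioo (0:ℝ) 1, gφ x * ψ x) = ∫ x in Ioo (0:ℝ) 1, gψ x * φ x := by
    have hc : (∫ x in Ioo (0:ℝ) 1, φ' x * ψ' x) = ∫ x in Ioo (0:ℝ) 1, ψ' x * φ' x :=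
      setIntegral_congr_fun measurableSet_Ioo fun x _ => by ring
    have := hibpφ; rw [hc, hibpψ] at this
    linarith
  -- drift term: FTC for v·φ·ψ
  have hdrift : (∫ x in Ioo (0:ℝ) 1, (v' x * φ x + v x * φ' x) * ψ x)
      + (∫ x in Ioo (0:ℝ) 1, v x * ψ' x * φ x) = 0 := by
    have hD : ∀ x ∈ Icc (0:ℝ) 1, HasDerivWithinAt (fun y => v y * φ y * ψ y)
        ((v' x * φ x + v x * φ' x) * ψ x + v x * φ x * ψ' x) (Icc 0 1) x :=
      fun x hx => ((hv x hx).mul (hφ x hx)).mul (hψ x hx)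
    have hDc : ContinuousOn
        (fun x => (v' x * φ x + v x * φ' x) * ψ x + v x * φ x * ψ' x) (Icc 0 1) :=
      (((hv'c.mul hφcont).add (hvcont.mul hφ'c)).mul hψcont).add
        ((hvcont.mul hφcont).mul hψ'c)
    have hftc := ftc_sub hD hDc (le_refl (0:ℝ)) zero_le_one
    rw [hv0, hv1] at hftc
    simp only [zero_mul, sub_zero] at hftc
    have hsplit : (∫ x in Ioo (0:ℝ) 1,
        ((v' x * φ x + v x * φ' x) * ψ x + v x * φ x * ψ' x))
        = (∫ x in Ioo (0:ℝ) 1, (v' x * φ x + v x * φ' x) * ψ x)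
          + ∫ x in Ioo (0:ℝ) 1, v x * φ x * ψ' x := by
      refine integral_add IA2 ?_
      exact (((hvcont.mul hφcont).mul hψ'c).integrableOn_Icc).mono_set Ioo_subset_Icc_self
    have hcomm : (∫ x in Ioo (0:ℝ) 1, v x * φ x * ψ' x)
        = ∫ x in Ioo (0:ℝ) 1, v x * ψ' x * φ x :=
      setIntegral_congr_fun measurableSet_Ioo fun x _ => by ring
    rw [hsplit, hcomm] at hftc
    linarith
  -- integrate the eigen-equations
  have hA : m * (∫ x in Ioo (0:ℝ) 1, gφ x * ψ x)
      - (∫ x in Ioo (0:ℝ) 1, (v' x * φ x + v x * φ' x) * ψ x)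
      - d * (∫ x in Ioo (0:ℝ) 1, chi α x * φ x * ψ x)
      + b * R₁ * (∫ x in Ioo (0:ℝ) 1, Nop α μ p φ x * ψ x)
      = s₁ * ∫ x in Ioo (0:ℝ) 1, φ x * ψ x := by
    have h0 : (∫ x in Ioo (0:ℝ) 1,
        (m * gφ x - (v' x * φ x + v x * φ' x) - d * chi α x * φ x
          + b * R₁ * Nop α μ p φ x) * ψ x)
        = ∫ x in Ioo (0:ℝ) 1, s₁ * (φ x * ψ x) := by
      refine integral_congr_ae ?_
      filter_upwards [heigφ] with x hx
      rw [hx]; ring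
    rw [integral_const_mul] at h0
    rw [← h0]
    have hfun : (fun x => (m * gφ x - (v' x * φ x + v x * φ' x) - d * chi α x * φ x
          + b * R₁ * Nop α μ p φ x) * ψ x)
        = fun x => (m * (gφ x * ψ x) - (v' x * φ x + v x * φ' x) * ψ x
            - d * (chi α x * φ x * ψ x)) + (b * R₁) * (Nop α μ p φ x * ψ x) := by
      funext x; ring
    have i1 : Integrable (fun x => m * (gφ x * ψ x)) (volume.restrict (Ioo (0:ℝ) 1)) :=
      IA1.const_mul m
    have i3 : Integrable (fun x => d * (chi α x * φ x * ψ x))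
        (volume.restrict (Ioo (0:ℝ) 1)) := IA3.const_mul d
    have i4 : Integrable (fun x => (b * R₁) * (Nop α μ p φ x * ψ x))
        (volume.restrict (Ioo (0:ℝ) 1)) := IA4.const_mul _
    have i12 : Integrable (fun x => m * (gφ x * ψ x) - (v' x * φ x + v x * φ' x) * ψ x)
        (volume.restrict (Ioo (0:ℝ) 1)) := i1.sub IA2
    have i123 : Integrable (fun x => m * (gφ x * ψ x) - (v' x * φ x + v x * φ' x) * ψ x
        - d * (chi α x * φ x * ψ x)) (volume.restrict (Ioo (0:ℝ) 1)) := i12.sub i3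
    rw [hfun, integral_add i123 i4, integral_sub i12 i3, integral_sub i1 IA2,
      integral_const_mul, integral_const_mul, integral_const_mul]
  have hB : m * (∫ x in Ioo (0:ℝ) 1, gψ x * φ x)
      + (∫ x in Ioo (0:ℝ) 1, v x * ψ' x * φ x)
      - d * (∫ x in Ioo (0:ℝ) 1, chi α x * ψ x * φ x)
      + b * R₂ * (∫ x in Ioo (0:ℝ) 1, NopStar α μ p ψ x * φ x)
      = s₂ * ∫ x in Ioo (0:ℝ) 1, φ x * ψ x := by
    have h0 : (∫ x in Ioo (0:ℝ) 1,
        (m * gψ x + v x * ψ' x - d * chi α x * ψ x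
          + b * R₂ * NopStar α μ p ψ x) * φ x)
        = ∫ x in Ioo (0:ℝ) 1, s₂ * (φ x * ψ x) := by
      refine integral_congr_ae ?_
      filter_upwards [heigψ] with x hx
      rw [hx]; ring
    rw [integral_const_mul] at h0
    rw [← h0]
    have hfun : (fun x => (m * gψ x + v x * ψ' x - d * chi α x * ψ x
          + b * R₂ * NopStar α μ p ψ x) * φ x)
        = fun x => (m * (gψ x * φ x) + v x * ψ' x * φ x
            - d * (chi α x * ψ x * φ x)) + (b * R₂) * (NopStar α μ p ψ x * φ x) := by
      funext x; ring
    have i1 : Integrable (fun x => m * (gψ x * φ x)) (volume.restrict (Ioo (0:ℝ) 1)) :=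
      IB1.const_mul m
    have i3 : Integrable (fun x => d * (chi α x * ψ x * φ x))
        (volume.restrict (Ioo (0:ℝ) 1)) := IB3.const_mul d
    have i4 : Integrable (fun x => (b * R₂) * (NopStar α μ p ψ x * φ x))
        (volume.restrict (Ioo (0:ℝ) 1)) := IB4.const_mul _
    have i12 : Integrable (fun x => m * (gψ x * φ x) + v x * ψ' x * φ x)
        (volume.restrict (Ioo (0:ℝ) 1)) := i1.add IB2
    have i123 : Integrable (fun x => m * (gψ x * φ x) + v x * ψ' x * φ x
        - d * (chi α x * ψ x * φ x)) (volume.restrict (Ioo (0:ℝ) 1)) := i12.sub i3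
    rw [hfun, integral_add i123 i4, integral_sub i12 i3, integral_add i1 IB2,
      integral_const_mul, integral_const_mul, integral_const_mul]
  linear_combination hA - hB - m * hA1B1 + hdrift + d * hA3B3 - b * R₂ * hA4B4
end

section
/- Let b, m > 0, d ∈ ℝ, μ ∈ [0,1], α ∈ (0,1), R, s ∈ ℝ, let v ∈ C¹([0,1]) with v(0) = v(1) = 0, and let p ∈ L²((0,1)×(0,1)) with p ≥ 0 a.e. and ∫₀¹ p(x,y) dx = 1 for a.e. y. Suppose φ : [0,1] → ℝ is continuous, nonnegative, and strictly positive on a set of positive measure in (0,α), is C¹ with φ'(0) = φ'(1) = 0, has an integrable second derivative g (i.e. φ'(x) = φ'(0) + ∫₀ˣ g(s) ds), and satisfies for a.e. x ∈ (0,1): m g(x) − (vφ)'(x) − d χ_α(x) φ(x) + b R (Nφ)(x) = s φ(x), where (Nφ)(x) = (1−μ)χ_α(x)φ(x) + μ∫₀¹ χ_α(y)φ(y)p(x,y)dy. Then s ∫₀¹ φ(x) dx = (bR − d) ∫₀¹ χ_α(x) φ(x) dx; consequently, if φ > 0 on [0,1], then s > 0 if and only if R > d/b, s = 0 if and only if R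 = d/b, and s < 0 if and only if R < d/b. -/
open MeasureTheory Set

lemma sign_aux {s P T K : ℝ} (h : s * P = T * K) (hP : 0 < P) (hK : 0 < K) :
    (0 < s ↔ 0 < T) ∧ (s = 0 ↔ T = 0) ∧ (s < 0 ↔ T < 0) := by
  refine ⟨⟨fun hs => ?_, fun hT => ?_⟩, ⟨fun hs => ?_, fun hT => ?_⟩,
    ⟨fun hs => ?_, fun hT => ?_⟩⟩
  · nlinarith [mul_pos hs hP]
  · nlinarith [mul_pos hT hK]
  · have h0 : T * K = 0 := by rw [← h, hs, zero_mul]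
    rcases mul_eq_zero.mp h0 with h' | h'
    · exact h'
    · exact absurd h' (ne_of_gt hK)
  · have h0 : s * P = 0 := by rw [h, hT, zero_mul]
    rcases mul_eq_zero.mp h0 with h' | h'
    · exact h'
    · exact absurd h' (ne_of_gt hP)
  · nlinarith [mul_pos (neg_pos.mpr hs) hP]
  · nlinarith [mul_pos (neg_pos.mpr hT) hK]

/-- Sign characterization of an eigenvalue with nonnegative eigenfunction of
`L_R = A + bRN`: integrating the eigenvalue equation gives
`s∫₀¹ φ = (bR − d)∫₀¹ χ_α φ`; if moreover `φ > 0` on `[0,1]`, then the sign of `s`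
matches the position of `R` relative to `d/b`. -/
theorem stmt_19 (b m d μ α R s : ℝ) (hb : 0 < b) (hm : 0 < m)
    (hμ : μ ∈ Set.Icc (0:ℝ) 1) (hα : α ∈ Set.Ioo (0:ℝ) 1)
    (v v' : ℝ → ℝ)
    (hv : ∀ x ∈ Set.Icc (0:ℝ) 1, HasDerivWithinAt v (v' x) (Set.Icc 0 1) x)
    (hv'c : ContinuousOn v' (Set.Icc 0 1))
    (hv0 : v 0 = 0) (hv1 : v 1 = 0)
    (p : ℝ × ℝ → ℝ)
    (hp : MemLp p 2 (volume.restrict ((Set.Ioo (0:ℝ) 1) ×ˢ (Set.Ioo (0:ℝ) 1))))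
    (hp0 : ∀ᵐ z ∂(volume.restrict ((Set.Ioo (0:ℝ) 1) ×ˢ (Set.Ioo (0:ℝ) 1))), 0 ≤ p z)
    (hpnorm : ∀ᵐ y ∂(volume.restrict (Set.Ioo (0:ℝ) 1)),
      (∫ x in Set.Ioo (0:ℝ) 1, p (x, y)) = 1)
    (φ φ' g : ℝ → ℝ)
    (hφc : ContinuousOn φ (Set.Icc 0 1))
    (hφ0 : ∀ x ∈ Set.Icc (0:ℝ) 1, 0 ≤ φ x)
    (hφpos : 0 < volume {x ∈ Set.Ioo (0:ℝ) α | 0 < φ x})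
    (hφ : ∀ x ∈ Set.Icc (0:ℝ) 1, HasDerivWithinAt φ (φ' x) (Set.Icc 0 1) x)
    (hφ'c : ContinuousOn φ' (Set.Icc 0 1))
    (hφb0 : φ' 0 = 0) (hφb1 : φ' 1 = 0)
    (hg : IntegrableOn g (Set.Ioo (0:ℝ) 1))
    (hφac : ∀ x ∈ Set.Icc (0:ℝ) 1, φ' x = φ' 0 + ∫ t in (0:ℝ)..x, g t)
    (heig : ∀ᵐ x ∂(volume.restrict (Set.Ioo (0:ℝ) 1)),
      m * g x - (v' x * φ x + v x * φ' x) - d * chi α x * φ x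
        + b * R * Nop α μ p φ x = s * φ x) :
    s * (∫ x in Set.Ioo (0:ℝ) 1, φ x)
      = (b * R - d) * ∫ x in Set.Ioo (0:ℝ) 1, chi α x * φ x ∧
    ((∀ x ∈ Set.Icc (0:ℝ) 1, 0 < φ x) →
      ((0 < s ↔ d / b < R) ∧ (s = 0 ↔ R = d / b) ∧ (s < 0 ↔ R < d / b))) := by
  obtain ⟨hα0, hα1⟩ := hα
  have hIsub : Set.Ioo (0:ℝ) 1 ⊆ Set.Icc 0 1 := Ioo_subset_Icc_self
  have hchi_meas : Measurable (chi α) :=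
    Measurable.ite measurableSet_Iio measurable_const measurable_const
  have hchi_bdd : ∀ x, ‖chi α x‖ ≤ 1 := by
    intro x; unfold chi; split <;> simp
  have hchi_nonneg : ∀ x, 0 ≤ chi α x := by
    intro x; unfold chi; split <;> norm_num
  have hφI : IntegrableOn φ (Set.Ioo (0:ℝ) 1) := hφc.integrableOn_Icc.mono_set hIsub
  have hchiφI : IntegrableOn (fun x => chi α x * φ x) (Set.Ioo (0:ℝ) 1) :=
    hφI.bdd_mul hchi_meas.aestronglyMeasurable (Filter.Eventually.of_forall hchi_bdd)
  -- ∫ g = 0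
  have hgint : ∫ x in Set.Ioo (0:ℝ) 1, g x = 0 := by
    have h1 := hφac 1 (by norm_num : (1:ℝ) ∈ Set.Icc (0:ℝ) 1)
    rw [hφb1, hφb0] at h1
    have h2 : ∫ t in (0:ℝ)..1, g t = 0 := by linarith
    rwa [intervalIntegral.integral_of_le zero_le_one,
      MeasureTheory.integral_Ioc_eq_integral_Ioo] at h2
  -- ∫ (vφ)' = 0
  have hcv : ContinuousOn v (Set.Icc 0 1) := fun x hx => (hv x hx).continuousWithinAt
  have hvφcont : ContinuousOn (fun x => v x * φ x) (Set.Icc 0 1) := hcv.mul hφc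
  have hvφderiv_cont : ContinuousOn (fun x => v' x * φ x + v x * φ' x) (Set.Icc 0 1) :=
    (hv'c.mul hφc).add (hcv.mul hφ'c)
  have hvφint : ∫ x in Set.Ioo (0:ℝ) 1, (v' x * φ x + v x * φ' x) = 0 := by
    have hd : ∀ x ∈ Set.Ioo (0:ℝ) 1, HasDerivWithinAt (fun x => v x * φ x)
        (v' x * φ x + v x * φ' x) (Set.Ioi x) x := by
      intro x hx
      have h1 : HasDerivWithinAt (fun x => v x * φ x) (v' x * φ x + v x * φ' x)
          (Set.Icc 0 1) x := (hv x (hIsub hx)).mul (hφ x (hIsub hx))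
      exact (h1.hasDerivAt (Icc_mem_nhds hx.1 hx.2)).hasDerivWithinAt
    have hint : IntervalIntegrable (fun x => v' x * φ x + v x * φ' x) volume 0 1 := by
      apply ContinuousOn.intervalIntegrable
      rwa [uIcc_of_le zero_le_one]
    have hF := intervalIntegral.integral_eq_sub_of_hasDeriv_right_of_le zero_le_one
      hvφcont hd hint
    rw [intervalIntegral.integral_of_le zero_le_one,
      MeasureTheory.integral_Ioc_eq_integral_Ioo] at hF
    rw [hF, hv0, hv1]; ring
  -- kernel integrability
  haveI hprodfin : IsFiniteMeasure
      (volume.restrict ((Set.Ioo (0:ℝ) 1) ×ˢ (Set.Ioo (0:ℝ) 1))) := by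
    constructor
    rw [Measure.restrict_apply_univ, Measure.volume_eq_prod, Measure.prod_prod]
    simp [Real.volume_Ioo]
  have hpInt : Integrable p (volume.restrict ((Set.Ioo (0:ℝ) 1) ×ˢ (Set.Ioo (0:ℝ) 1))) :=
    hp.integrable one_le_two
  obtain ⟨C, hC⟩ : ∃ C, ∀ x ∈ Set.Icc (0:ℝ) 1, ‖φ x‖ ≤ C :=
    isCompact_Icc.exists_bound_of_continuousOn hφc
  have hFmeas : AEStronglyMeasurable (fun z : ℝ × ℝ => chi α z.2 * φ z.2)
      (volume.restrict ((Set.Ioo (0:ℝ) 1) ×ˢ (Set.Ioo (0:ℝ) 1))) := by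
    rw [Measure.volume_eq_prod, ← Measure.prod_restrict]
    exact hchiφI.aestronglyMeasurable.comp_snd
  have hFint : Integrable (fun z : ℝ × ℝ => chi α z.2 * φ z.2 * p z)
      (volume.restrict ((Set.Ioo (0:ℝ) 1) ×ˢ (Set.Ioo (0:ℝ) 1))) := by
    apply hpInt.bdd_mul hFmeas (c := 1 * C)
    filter_upwards [ae_restrict_mem (measurableSet_Ioo.prod measurableSet_Ioo)] with z hz
    rw [norm_mul]
    exact mul_le_mul (hchi_bdd _) (hC _ (hIsub hz.2)) (norm_nonneg _) zero_le_one
  have hFint' : Integrable (fun z : ℝ × ℝ => chi α z.2 * φ z.2 * p z)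
      ((volume.restrict (Set.Ioo (0:ℝ) 1)).prod (volume.restrict (Set.Ioo (0:ℝ) 1))) := by
    rwa [Measure.prod_restrict, ← Measure.volume_eq_prod]
  have hswap : (∫ x in Set.Ioo (0:ℝ) 1, ∫ y in Set.Ioo (0:ℝ) 1, chi α y * φ y * p (x, y))
      = ∫ y in Set.Ioo (0:ℝ) 1, ∫ x in Set.Ioo (0:ℝ) 1, chi α y * φ y * p (x, y) :=
    integral_integral_swap hFint'
  have hdouble : (∫ x in Set.Ioo (0:ℝ) 1, ∫ y in Set.Ioo (0:ℝ) 1, chi α y * φ y * p (x, y))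
      = ∫ x in Set.Ioo (0:ℝ) 1, chi α x * φ x := by
    rw [hswap]
    apply integral_congr_ae
    filter_upwards [hpnorm] with y hy
    rw [MeasureTheory.integral_const_mul, hy, mul_one]
  have hinnerInt : Integrable (fun x => ∫ y in Set.Ioo (0:ℝ) 1, chi α y * φ y * p (x, y))
      (volume.restrict (Set.Ioo (0:ℝ) 1)) := hFint'.integral_prod_left
  -- the Nop integral
  have hNop1 : Integrable (fun x => (1 - μ) * chi α x * φ x)
      (volume.restrict (Set.Ioo (0:ℝ) 1)) := by
    simpa [mul_assoc] using hchiφI.const_mul (1 - μ)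
  have hNopInt : Integrable (Nop α μ p φ) (volume.restrict (Set.Ioo (0:ℝ) 1)) := by
    unfold Nop
    exact hNop1.add (hinnerInt.const_mul μ)
  have hNopVal : ∫ x in Set.Ioo (0:ℝ) 1, Nop α μ p φ x
      = ∫ x in Set.Ioo (0:ℝ) 1, chi α x * φ x := by
    unfold Nop
    rw [integral_add hNop1 (hinnerInt.const_mul μ), MeasureTheory.integral_const_mul, hdouble]
    have h1 : ∫ x in Set.Ioo (0:ℝ) 1, (1 - μ) * chi α x * φ x
        = (1 - μ) * ∫ x in Set.Ioo (0:ℝ) 1, chi α x * φ x := by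
      simp_rw [mul_assoc]
      exact MeasureTheory.integral_const_mul _ _
    rw [h1]; ring
  -- main identity
  have hmain : s * (∫ x in Set.Ioo (0:ℝ) 1, φ x)
      = (b * R - d) * ∫ x in Set.Ioo (0:ℝ) 1, chi α x * φ x := by
    have h0 : ∫ x in Set.Ioo (0:ℝ) 1,
        (m * g x - (v' x * φ x + v x * φ' x) - d * chi α x * φ x
          + b * R * Nop α μ p φ x)
        = ∫ x in Set.Ioo (0:ℝ) 1, s * φ x := integral_congr_ae heig
    have hA : Integrable (fun x => m * g x) (volume.restrict (Set.Ioo (0:ℝ) 1)) :=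
      hg.const_mul m
    have hB : IntegrableOn (fun x => v' x * φ x + v x * φ' x) (Set.Ioo (0:ℝ) 1) :=
      hvφderiv_cont.integrableOn_Icc.mono_set hIsub
    have hCint : Integrable (fun x => d * chi α x * φ x)
        (volume.restrict (Set.Ioo (0:ℝ) 1)) := by
      simpa [mul_assoc] using hchiφI.const_mul d
    have hD : Integrable (fun x => b * R * Nop α μ p φ x)
        (volume.restrict (Set.Ioo (0:ℝ) 1)) := hNopInt.const_mul (b * R)
    have hI2 : Integrable (fun x => m * g x - (v' x * φ x + v x * φ' x))
        (volume.restrict (Set.Ioo (0:ℝ) 1)) := hA.sub hB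
    have hI1 : Integrable
        (fun x => m * g x - (v' x * φ x + v x * φ' x) - d * chi α x * φ x)
        (volume.restrict (Set.Ioo (0:ℝ) 1)) := hI2.sub hCint
    rw [integral_add hI1 hD, integral_sub hI2 hCint,
      integral_sub hA hB, MeasureTheory.integral_const_mul m,
      MeasureTheory.integral_const_mul (b * R), MeasureTheory.integral_const_mul s,
      hgint, hvφint, hNopVal] at h0
    have hdK : ∫ x in Set.Ioo (0:ℝ) 1, d * chi α x * φ x
        = d * ∫ x in Set.Ioo (0:ℝ) 1, chi α x * φ x := by
      simp_rw [mul_assoc]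
      exact MeasureTheory.integral_const_mul _ _
    rw [hdK] at h0
    linear_combination -h0
  refine ⟨hmain, fun hpos => ?_⟩
  -- positivity of the two integrals
  obtain ⟨x0, hx0, hmin⟩ := isCompact_Icc.exists_isMinOn
    (nonempty_Icc.mpr zero_le_one) hφc
  have hc0 : 0 < φ x0 := hpos x0 hx0
  have hvol1 : (volume (Set.Ioo (0:ℝ) 1)).toReal = 1 := by
    simp [Real.volume_Ioo]
  have hvolα : (volume (Set.Ioo (0:ℝ) α)).toReal = α := by
    rw [Real.volume_Ioo]
    simp [ENNReal.toReal_ofReal hα0.le]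
  have hP : 0 < ∫ x in Set.Ioo (0:ℝ) 1, φ x := by
    have h1 : ∫ _x in Set.Ioo (0:ℝ) 1, φ x0 ≤ ∫ x in Set.Ioo (0:ℝ) 1, φ x := by
      refine setIntegral_mono_on ?_ hφI measurableSet_Ioo fun x hx => hmin (hIsub hx)
      exact integrableOn_const measure_Ioo_lt_top.ne
    rw [setIntegral_const, measureReal_def, hvol1, one_smul] at h1
    linarith
  have hsubα : Set.Ioo (0:ℝ) α ⊆ Set.Ioo (0:ℝ) 1 := Ioo_subset_Ioo le_rfl hα1.le
  have hK : 0 < ∫ x in Set.Ioo (0:ℝ) 1, chi α x * φ x := by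
    have hKeq : ∫ x in Set.Ioo (0:ℝ) α, chi α x * φ x = ∫ x in Set.Ioo (0:ℝ) α, φ x := by
      refine setIntegral_congr_fun measurableSet_Ioo fun x hx => ?_
      unfold chi
      rw [if_pos hx.2, one_mul]
    have hmono : ∫ x in Set.Ioo (0:ℝ) α, chi α x * φ x
        ≤ ∫ x in Set.Ioo (0:ℝ) 1, chi α x * φ x := by
      refine setIntegral_mono_set hchiφI ?_ (HasSubset.Subset.eventuallyLE hsubα)
      filter_upwards [ae_restrict_mem measurableSet_Ioo] with x hx
      exact mul_nonneg (hchi_nonneg x) (hφ0 x (hIsub hx))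
    have hlow : 0 < ∫ x in Set.Ioo (0:ℝ) α, φ x := by
      have h1 : ∫ _x in Set.Ioo (0:ℝ) α, φ x0 ≤ ∫ x in Set.Ioo (0:ℝ) α, φ x := by
        refine setIntegral_mono_on ?_ (hφI.mono_set hsubα) measurableSet_Ioo
          fun x hx => hmin (hIsub (hsubα hx))
        exact integrableOn_const measure_Ioo_lt_top.ne
      rw [setIntegral_const, measureReal_def, hvolα, smul_eq_mul] at h1
      nlinarith
    linarith [hKeq ▸ hmono]
  -- sign equivalences
  obtain ⟨h1, h2, h3⟩ := sign_aux hmain hP hK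
  have e1 : (d / b < R) ↔ 0 < b * R - d := by
    rw [div_lt_iff₀ hb]
    constructor <;> intro <;> linarith
  have e2 : (R = d / b) ↔ b * R - d = 0 := by
    rw [eq_div_iff (ne_of_gt hb)]
    constructor <;> intro <;> linarith
  have e3 : (R < d / b) ↔ b * R - d < 0 := by
    rw [lt_div_iff₀ hb]
    constructor <;> intro <;> linarith
  exact ⟨h1.trans e1.symm, h2.trans e2.symm, h3.trans e3.symm⟩
end
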